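/- For every θ ∈ ℂ with 0 < Im θ < 2π, the function t ↦ (1/t)·[−4·sinh(t(N−1)/N)·sinh(tB/(2N))·sinh(t(2−B)/(2N))/sinh²(t)]·cosh(t(1 − θ/(iπ))) is integrable on (0,∞), and the function F^T(θ) = exp of this integral is holomorphic (complex differentiable) on the open strip {θ : 0 < Im θ < 2π}. -/

import Mathlib

open Complex MeasureTheory

/-- The integrand of the minimal form factor of the affine `A_{N−1}`-Toda model:
`(1/t)·[−4·sinh(t(N−1)/N)·sinh(tB/(2N))·sinh(t(2−B)/(2N))/sinh²(t)]·cosh(t(1 − θ/(iπ)))`. -/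
noncomputable def fT (N : ℕ) (B : ℝ) (θ : ℂ) (t : ℝ) : ℂ :=
  (1 / (t : ℂ)) *
    (-4 * Complex.sinh ((t : ℂ) * (N - 1) / N) * Complex.sinh ((t : ℂ) * (B : ℂ) / (2 * N)) *
      Complex.sinh ((t : ℂ) * (2 - (B : ℂ)) / (2 * N)) / (Complex.sinh (t : ℂ)) ^ 2) *
    Complex.cosh ((t : ℂ) * (1 - θ / (I * (Real.pi : ℂ))))

/-- The minimal form factor of the affine `A_{N−1}`-Toda model. -/
noncomputable def FT (N : ℕ) (B : ℝ) (θ : ℂ) : ℂ :=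
  Complex.exp (∫ t in Set.Ioi (0 : ℝ), fT N B θ t)

/-!
For `x, y, z ≥ 0` with `x + y + z = t` one has `sinh x sinh y sinh z ≤ y e^{-t} sinh² t`, so the
`θ`-independent factor of the integrand is `O(e^{-t})` on `(0, ∞)`, including near `t = 0`. Since
`‖cosh (t w)‖ ≤ e^{t |Re w|}` and `w = 1 - θ/(iπ)` has `|Re w| = |1 - Im θ/π| < 1` on the strip,
the integrand and its `θ`-derivative are dominated by integrable functions, locally uniformly in
`θ`; differentiation under the integral sign gives holomorphy, and `F^T` is its exponential.
-/

open Set Filter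

namespace Real

/-- `sinh x * exp (-x) = (1 - exp (-2 * x)) / 2` is increasing. -/
theorem sinh_le_sinh_mul_exp_sub {x y : ℝ} (hxy : x ≤ y) :
    sinh x ≤ sinh y * exp (x - y) := by
  have h : exp (x - 2 * y) ≤ exp (-x) := exp_le_exp.2 (by linarith)
  have e₁ : exp y * exp (x - y) = exp x := by rw [← exp_add]; ring_nf
  have e₂ : exp (-y) * exp (x - y) = exp (x - 2 * y) := by rw [← exp_add]; ring_nf
  rw [sinh_eq, sinh_eq]
  nlinarith [exp_pos (x - y)]

theorem sinh_le_mul_exp (x : ℝ) : sinh x ≤ x * exp x := by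
  have h : 1 - 2 * x ≤ exp (-(2 * x)) := by linarith [add_one_le_exp (-(2 * x))]
  have e : exp x * exp (-(2 * x)) = exp (-x) := by rw [← exp_add]; ring_nf
  rw [sinh_eq]
  nlinarith [exp_pos x]

theorem sinh_mul_sinh_mul_sinh_le {x y z : ℝ} (hx : 0 ≤ x) (hy : 0 ≤ y) (hz : 0 ≤ z) :
    sinh x * sinh y * sinh z ≤ y * exp (-(x + y + z)) * sinh (x + y + z) ^ 2 := by
  set t := x + y + z
  have hx' := sinh_le_sinh_mul_exp_sub (show x ≤ t by linarith)
  have hz' := sinh_le_sinh_mul_exp_sub (show z ≤ t by linarith)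
  have hexp : exp (x - t) * exp y * exp (z - t) = exp (-t) := by
    rw [← exp_add, ← exp_add]; congr 1; ring
  calc sinh x * sinh y * sinh z
      ≤ (sinh t * exp (x - t)) * (y * exp y) * (sinh t * exp (z - t)) := by
        gcongr
        exact sinh_le_mul_exp y
    _ = y * (exp (x - t) * exp y * exp (z - t)) * sinh t ^ 2 := by ring
    _ = y * exp (-t) * sinh t ^ 2 := by rw [hexp]

end Real

namespace Complex

theorem norm_exp_le_exp_abs_re (z : ℂ) : ‖exp z‖ ≤ Real.exp |z.re| := by
  rw [norm_exp]; exact Real.exp_le_exp.2 (le_abs_self _)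

theorem norm_cosh_le_exp_abs_re (z : ℂ) : ‖cosh z‖ ≤ Real.exp |z.re| := by
  have h₁ := norm_exp_le_exp_abs_re z
  have h₂ := norm_exp_le_exp_abs_re (-z)
  rw [neg_re, abs_neg] at h₂
  have := norm_add_le (exp z) (exp (-z))
  rw [← two_cosh, norm_mul, Complex.norm_two] at this
  linarith

theorem norm_sinh_le_exp_abs_re (z : ℂ) : ‖sinh z‖ ≤ Real.exp |z.re| := by
  have h₁ := norm_exp_le_exp_abs_re z
  have h₂ := norm_exp_le_exp_abs_re (-z)
  rw [neg_re, abs_neg] at h₂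
  have := norm_sub_le (exp z) (exp (-z))
  rw [← two_sinh, norm_mul, Complex.norm_two] at this
  linarith

end Complex

theorem integrableOn_mul_exp_neg_mul {b : ℝ} (hb : 0 < b) :
    IntegrableOn (fun t : ℝ => t * Real.exp (-b * t)) (Ioi 0) := by
  refine (integrableOn_rpow_mul_exp_neg_mul_rpow (s := 1) (p := 1) (by norm_num) one_pos hb
    ).congr_fun (fun t _ => ?_) measurableSet_Ioi
  simp only [Real.rpow_one]

section CoshTransform

variable {a w : ℂ} {C δ t : ℝ}

theorem norm_mul_cosh_mul_le (ht : 0 ≤ t) (ha : ‖a‖ ≤ C * Real.exp (-t))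
    (hw : |w.re| ≤ 1 - δ) : ‖a * cosh (t * w)‖ ≤ C * Real.exp (-δ * t) := by
  have hcosh : ‖cosh (t * w)‖ ≤ Real.exp ((1 - δ) * t) := by
    refine (norm_cosh_le_exp_abs_re _).trans (Real.exp_le_exp.2 ?_)
    rw [re_ofReal_mul, abs_mul, abs_of_nonneg ht, mul_comm]
    gcongr
  calc ‖a * cosh (t * w)‖ ≤ C * Real.exp (-t) * Real.exp ((1 - δ) * t) := by
        rw [norm_mul]; gcongr; exact (norm_nonneg a).trans ha
    _ = C * Real.exp (-δ * t) := by
        rw [show -δ * t = -t + (1 - δ) * t by ring, Real.exp_add]; ring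

theorem norm_mul_mul_sinh_mul_le (ht : 0 ≤ t) (ha : ‖a‖ ≤ C * Real.exp (-t))
    (hw : |w.re| ≤ 1 - δ) : ‖a * (t * sinh (t * w))‖ ≤ C * (t * Real.exp (-δ * t)) := by
  have hsinh : ‖sinh (t * w)‖ ≤ Real.exp ((1 - δ) * t) := by
    refine (norm_sinh_le_exp_abs_re _).trans (Real.exp_le_exp.2 ?_)
    rw [re_ofReal_mul, abs_mul, abs_of_nonneg ht, mul_comm]
    gcongr
  calc ‖a * (t * sinh (t * w))‖ ≤ C * Real.exp (-t) * (t * Real.exp ((1 - δ) * t)) := by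
        rw [norm_mul, norm_mul, norm_real, Real.norm_of_nonneg ht]
        gcongr; exact (norm_nonneg a).trans ha
    _ = C * (t * Real.exp (-δ * t)) := by
        rw [show -δ * t = -t + (1 - δ) * t by ring, Real.exp_add]; ring

variable {h : ℝ → ℂ} (hh : AEStronglyMeasurable h (volume.restrict (Ioi 0)))
  (hC : ∀ t ∈ Ioi 0, ‖h t‖ ≤ C * Real.exp (-t))
include hh hC

theorem integrableOn_mul_cosh (hw : |w.re| < 1) :
    IntegrableOn (fun t : ℝ => h t * cosh (t * w)) (Ioi 0) :=
  Integrable.mono' ((exp_neg_integrableOn_Ioi 0 (sub_pos.2 hw)).const_mul C)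
    (hh.mul (by fun_prop : Continuous fun t : ℝ => cosh (t * w)).aestronglyMeasurable)
    (ae_restrict_of_forall_mem measurableSet_Ioi fun t ht =>
      norm_mul_cosh_mul_le (le_of_lt ht) (hC t ht) (sub_sub_cancel 1 _).ge)

theorem differentiableOn_integral_mul_cosh :
    DifferentiableOn ℂ (fun w => ∫ t in Ioi 0, h t * cosh (t * w)) {w | |w.re| < 1} := by
  intro w₀ hw₀
  set δ := (1 - |w₀.re|) / 2 with hδ_def
  have hδ : 0 < δ := half_pos (sub_pos.2 hw₀)
  have hball : ∀ w ∈ Metric.ball w₀ δ, |w.re| ≤ 1 - δ := fun w hw => by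
    have := (abs_sub_abs_le_abs_sub w.re w₀.re).trans
      ((abs_re_le_norm (w - w₀)).trans (le_of_lt (mem_ball_iff_norm.1 hw)))
    linarith
  have hderiv : ∀ t : ℝ, ∀ w : ℂ,
      HasDerivAt (fun w => h t * cosh (t * w)) (h t * (t * sinh (t * w))) w := fun t w => by
    have := (((hasDerivAt_id w).const_mul (t : ℂ)).ccosh).const_mul (h t)
    rwa [id, mul_one, mul_comm (sinh _)] at this
  have hF_meas : ∀ w : ℂ, AEStronglyMeasurable (fun t : ℝ => h t * cosh (t * w))
      (volume.restrict (Ioi 0)) := fun w =>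
    hh.mul (by fun_prop : Continuous fun t : ℝ => cosh (t * w)).aestronglyMeasurable
  have hF'_meas : AEStronglyMeasurable (fun t : ℝ => h t * (t * sinh (t * w₀)))
      (volume.restrict (Ioi 0)) :=
    hh.mul (by fun_prop : Continuous fun t : ℝ => (t : ℂ) * sinh (t * w₀)).aestronglyMeasurable
  have hbound : ∀ᵐ t ∂(volume.restrict (Ioi 0)), ∀ w ∈ Metric.ball w₀ δ,
      ‖h t * (t * sinh (t * w))‖ ≤ C * (t * Real.exp (-δ * t)) :=
    ae_restrict_of_forall_mem measurableSet_Ioi fun t ht w hw =>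
      norm_mul_mul_sinh_mul_le (le_of_lt ht) (hC t ht) (hball w hw)
  have key := hasDerivAt_integral_of_dominated_loc_of_deriv_le
    (F := fun w t => h t * cosh (t * w)) (F' := fun w t => h t * (t * sinh (t * w)))
    (Metric.ball_mem_nhds w₀ hδ) (Eventually.of_forall hF_meas)
    (integrableOn_mul_cosh hh hC hw₀) hF'_meas hbound
    ((integrableOn_mul_exp_neg_mul hδ).const_mul C)
    (Eventually.of_forall fun t w _ => hderiv t w)
  exact key.2.differentiableAt.differentiableWithinAt

end CoshTransform

/-- The `θ`-independent factor of the integrand: `fT N B θ t` unfolds to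
`todaKernel N B t * cosh (t * (1 - θ / (I * π)))`. -/
noncomputable def todaKernel (N : ℕ) (B t : ℝ) : ℂ :=
  (1 / (t : ℂ)) *
    (-4 * Complex.sinh ((t : ℂ) * (N - 1) / N) * Complex.sinh ((t : ℂ) * (B : ℂ) / (2 * N)) *
      Complex.sinh ((t : ℂ) * (2 - (B : ℂ)) / (2 * N)) / (Complex.sinh (t : ℂ)) ^ 2)

theorem todaKernel_eq_ofReal (N : ℕ) (B t : ℝ) :
    todaKernel N B t = ((-4 * Real.sinh (t * (N - 1) / N) * Real.sinh (t * B / (2 * N)) *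
      Real.sinh (t * (2 - B) / (2 * N)) / (t * Real.sinh t ^ 2) : ℝ) : ℂ) := by
  push_cast
  rw [todaKernel]
  ring

theorem norm_todaKernel_le {N : ℕ} {B t : ℝ} (hN : 1 ≤ N) (hB0 : 0 ≤ B) (hB2 : B ≤ 2)
    (ht : 0 < t) : ‖todaKernel N B t‖ ≤ 2 * B / N * Real.exp (-t) := by
  have hN' : (1 : ℝ) ≤ N := by exact_mod_cast hN
  set x := t * (N - 1) / N
  set y := t * B / (2 * N)
  set z := t * (2 - B) / (2 * N)
  have hx : 0 ≤ x := div_nonneg (mul_nonneg ht.le (by linarith)) (by linarith)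
  have hy : 0 ≤ y := by positivity
  have hz : 0 ≤ z := div_nonneg (mul_nonneg ht.le (by linarith)) (by positivity)
  have hsum : x + y + z = t := by simp only [x, y, z]; field_simp; ring
  have hs : 0 < Real.sinh t := Real.sinh_pos_iff.2 ht
  have hprod := Real.sinh_mul_sinh_mul_sinh_le hx hy hz
  rw [hsum] at hprod
  rw [todaKernel_eq_ofReal, norm_real, Real.norm_eq_abs]
  change |-4 * Real.sinh x * Real.sinh y * Real.sinh z / (t * Real.sinh t ^ 2)| ≤ _
  rw [neg_mul, neg_mul, neg_mul, neg_div, abs_neg, abs_of_nonneg (by positivity),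
    div_le_iff₀ (by positivity)]
  calc 4 * Real.sinh x * Real.sinh y * Real.sinh z
      ≤ 4 * (y * Real.exp (-t) * Real.sinh t ^ 2) := by linarith
    _ = 2 * B / N * Real.exp (-t) * (t * Real.sinh t ^ 2) := by
        simp only [y]; field_simp; ring

theorem re_one_sub_div_I_mul_pi (θ : ℂ) : (1 - θ / (I * Real.pi)).re = 1 - θ.im / Real.pi := by
  have := Real.pi_ne_zero
  simp only [sub_re, one_re, div_re, mul_re, I_re, ofReal_re, zero_mul, I_im, ofReal_im,
    mul_zero, sub_self, normSq_apply, mul_im, one_mul, zero_add, zero_div, sub_right_inj]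
  field_simp

theorem abs_re_one_sub_div_I_mul_pi_lt_one {θ : ℂ} (h₀ : 0 < θ.im) (h₂ : θ.im < 2 * Real.pi) :
    |(1 - θ / (I * Real.pi)).re| < 1 := by
  rw [re_one_sub_div_I_mul_pi, abs_sub_lt_iff, sub_lt_self_iff, sub_lt_iff_lt_add,
    div_lt_iff₀ Real.pi_pos]
  exact ⟨div_pos h₀ Real.pi_pos, by linarith⟩

theorem FT_integrable_and_holomorphic (N : ℕ) (hN : 2 ≤ N) (B : ℝ)
    (hB0 : 0 < B) (hB2 : B < 2) :
    (∀ θ : ℂ, 0 < θ.im → θ.im < 2 * Real.pi → IntegrableOn (fT N B θ) (Set.Ioi 0)) ∧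
    DifferentiableOn ℂ (FT N B) {θ : ℂ | 0 < θ.im ∧ θ.im < 2 * Real.pi} := by
  have hmeas : AEStronglyMeasurable (todaKernel N B) (volume.restrict (Ioi 0)) := by
    unfold todaKernel; fun_prop
  have hbound : ∀ t ∈ Ioi 0, ‖todaKernel N B t‖ ≤ 2 * B / N * Real.exp (-t) := fun t ht =>
    norm_todaKernel_le (by omega) hB0.le hB2.le ht
  refine ⟨fun θ h₀ h₂ => integrableOn_mul_cosh hmeas hbound
    (abs_re_one_sub_div_I_mul_pi_lt_one h₀ h₂), ?_⟩
  have hstrip : MapsTo (fun θ : ℂ => 1 - θ / (I * Real.pi))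
      {θ : ℂ | 0 < θ.im ∧ θ.im < 2 * Real.pi} {w | |w.re| < 1} := fun θ hθ =>
    abs_re_one_sub_div_I_mul_pi_lt_one hθ.1 hθ.2
  exact ((differentiableOn_integral_mul_cosh hmeas hbound).comp (by fun_prop) hstrip).cexp
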